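/- Let α ∈ (0,1) and U : ℝ → ℝ be strictly increasing and continuous with generalized inverse U^{-1}. The capital allocation additivity property ρ_U^α(S) = Σ_{i=1}^n ρ_U^α(X_i | S), where S = X_1 + ⋯ + X_n, holds for every n ≥ 2 and every vector (X_1,…,X_n) of integrable random variables whose sum S has a continuous distribution function (and all conditional expectations exist), if and only if U is linear, i.e., U(x) = ax + b with a > 0. -/

import Mathlib

open MeasureTheory Real Set

/-- Value at Risk at level `α`: `VaR_α(X) = inf {x | F_X(x) ≥ α}`. -/
noncomputable def VaR {Ω : Type*} [MeasurableSpace Ω] (P : Measure Ω) (X : Ω → ℝ) (α : ℝ) : ℝ :=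
  sInf {x : ℝ | α ≤ (P {ω | X ω ≤ x}).toReal}

/-- The cumulative distribution function of `X` under `P`. -/
noncomputable def cdfR {Ω : Type*} [MeasurableSpace Ω] (P : Measure Ω) (X : Ω → ℝ) (x : ℝ) : ℝ :=
  (P {ω | X ω ≤ x}).toReal

/-- Conditional expectation of `f` given the event `A`: `E[f | A]`. -/
noncomputable def condExpOn {Ω : Type*} [MeasurableSpace Ω] (P : Measure Ω) (f : Ω → ℝ)
    (A : Set Ω) : ℝ :=
  (∫ ω in A, f ω ∂P) / (P A).toReal

/-- The tail event `{X ≥ VaR_α(X)}`. -/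
def tailEvent {Ω : Type*} [MeasurableSpace Ω] (P : Measure Ω) (X : Ω → ℝ) (α : ℝ) : Set Ω :=
  {ω | VaR P X α ≤ X ω}

/-- Generalized inverse `U⁻¹(y) = inf {x | U(x) ≥ y}`. -/
noncomputable def ginv (U : ℝ → ℝ) (y : ℝ) : ℝ := sInf {x : ℝ | y ≤ U x}

/-- Tail Quasi-Linear Mean `ρ_U^α(X) = U⁻¹(E[U(X) | X ≥ VaR_α(X)])`. -/
noncomputable def TQLM {Ω : Type*} [MeasurableSpace Ω] (P : Measure Ω) (X : Ω → ℝ) (α : ℝ)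
    (U : ℝ → ℝ) : ℝ :=
  ginv U (condExpOn P (fun ω => U (X ω)) (tailEvent P X α))

/-- Conditional Tail Expectation `CTE_α(X) = E[X | X ≥ VaR_α(X)]`. -/
noncomputable def CTE {Ω : Type*} [MeasurableSpace Ω] (P : Measure Ω) (X : Ω → ℝ) (α : ℝ) : ℝ :=
  condExpOn P X (tailEvent P X α)

/-- Tail Conditional Entropic Risk Measure `ρ_γ^α(X) = (1/γ) log E[e^{γX} | X ≥ VaR_α(X)]`. -/
noncomputable def TCERM {Ω : Type*} [MeasurableSpace Ω] (P : Measure Ω) (X : Ω → ℝ) (α : ℝ)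
    (γ : ℝ) : ℝ :=
  (1 / γ) * Real.log (condExpOn P (fun ω => Real.exp (γ * X ω)) (tailEvent P X α))

/-! Write `M(x, y) = U⁻¹((U x + U y) / 2)`. Let `S` be uniform on an interval whose tail above
`VaR_α(S) = z` has length `ε`, let `X₀` be `p` on the lower half of the tail and `q` elsewhere, and
`X₁ = S - X₀`. Additivity for `(X₀, X₁)` traps `M(p, q) + M(z - p, z - q)` within `ε` of `z`;
letting `ε → 0` and taking `z = p + q` gives `M(p, q) = (p + q) / 2`. So `U` maps midpoints to
midpoints, and a continuous such map is affine. Conversely, for affine `U` every contribution is a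
conditional tail expectation, and these are additive. -/

open ProbabilityTheory

section GeneralizedInverse

variable {U : ℝ → ℝ}

lemma ginv_apply (hU : StrictMono U) (x : ℝ) : ginv U (U x) = x := by
  have h : {y : ℝ | U x ≤ U y} = Ici x := by ext y; simp [hU.le_iff_le]
  rw [ginv, h, csInf_Ici]

lemma ginv_mem_Icc (hU : StrictMono U) {a b y : ℝ} (ha : U a ≤ y) (hb : y ≤ U b) :
    ginv U y ∈ Icc a b := by
  have hlow : a ∈ lowerBounds {x : ℝ | y ≤ U x} := fun x hx => hU.le_iff_le.mp (ha.trans hx)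
  exact ⟨le_csInf ⟨b, hb⟩ hlow, csInf_le ⟨a, hlow⟩ hb⟩

lemma apply_ginv (hU : StrictMono U) (hUc : Continuous U) {a b y : ℝ} (ha : U a ≤ y)
    (hb : y ≤ U b) : U (ginv U y) = y := by
  obtain ⟨x, -, rfl⟩ :=
    intermediate_value_Icc (hU.le_iff_le.mp (ha.trans hb)) hUc.continuousOn ⟨ha, hb⟩
  rw [ginv_apply hU]

lemma ginv_affine {a b : ℝ} (ha : 0 < a) (y : ℝ) : ginv (fun x => a * x + b) y = (y - b) / a := by
  have h : {x : ℝ | y ≤ a * x + b} = Ici ((y - b) / a) := by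
    ext x
    rw [mem_ofPred_eq, mem_Ici, div_le_iff₀' ha]
    constructor <;> intro h <;> linarith
  rw [ginv, h, csInf_Ici]

end GeneralizedInverse

noncomputable def quasiMean (U : ℝ → ℝ) (x y : ℝ) : ℝ := ginv U ((U x + U y) / 2)

section QuasiMean

variable {U : ℝ → ℝ}

lemma quasiMean_comm (U : ℝ → ℝ) (x y : ℝ) : quasiMean U x y = quasiMean U y x := by
  rw [quasiMean, quasiMean, add_comm]

lemma apply_quasiMean (hU : StrictMono U) (hUc : Continuous U) (x y : ℝ) :
    U (quasiMean U x y) = (U x + U y) / 2 := by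
  rcases le_total (U x) (U y) with h | h
  · exact apply_ginv hU hUc (a := x) (b := y) (by linarith) (by linarith)
  · exact apply_ginv hU hUc (a := y) (b := x) (by linarith) (by linarith)

lemma ginv_mem_Icc_quasiMean (hU : StrictMono U) (hUc : Continuous U) {x y x' y' c : ℝ}
    (h : (U x + U y) / 2 ≤ c) (h' : c ≤ (U x' + U y') / 2) :
    ginv U c ∈ Icc (quasiMean U x y) (quasiMean U x' y') :=
  ginv_mem_Icc hU (by rwa [apply_quasiMean hU hUc]) (by rwa [apply_quasiMean hU hUc])

end QuasiMean

lemma Continuous.eq_affine_of_map_midpoint {f : ℝ → ℝ} (hf : Continuous f)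
    (hmid : ∀ x y, f (midpoint ℝ x y) = midpoint ℝ (f x) (f y)) (x : ℝ) :
    f x = (f 1 - f 0) * x + f 0 := by
  let g : ℝ →ᵃ[ℝ] ℝ := AffineMap.ofMapMidpoint f hmid hf
  have hlin : ∀ t, g.linear t = f t - f 0 := fun t => by
    have h := g.linearMap_vsub t 0
    rwa [vsub_eq_sub, sub_zero] at h
  have h := g.linear.map_smul x 1
  rw [smul_eq_mul, mul_one, smul_eq_mul, hlin, hlin] at h
  linarith

section CondExpOn

variable {Ω : Type*} [MeasurableSpace Ω] {P : Measure Ω} {f : Ω → ℝ} {A : Set Ω}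

lemma integrable_comp_of_ae_mem_Icc [IsFiniteMeasure P] {g : ℝ → ℝ} (hg : Monotone g)
    (hgc : Continuous g) (hf : Measurable f) {c d : ℝ} (hfb : ∀ᵐ ω ∂P, f ω ∈ Icc c d) :
    Integrable (fun ω => g (f ω)) P :=
  Integrable.of_mem_Icc (g c) (g d) (hgc.measurable.comp hf).aemeasurable
    (hfb.mono fun _ h => ⟨hg h.1, hg h.2⟩)

lemma condExpOn_eq_setAverage (P : Measure Ω) (f : Ω → ℝ) (A : Set Ω) :
    condExpOn P f A = ⨍ ω in A, f ω ∂P := by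
  rw [condExpOn, setAverage_eq, smul_eq_mul, measureReal_def, div_eq_inv_mul]

lemma condExpOn_mem_Icc [IsFiniteMeasure P] (hA : P A ≠ 0) (hf : IntegrableOn f A P) {c d : ℝ}
    (hfA : ∀ᵐ ω ∂P.restrict A, f ω ∈ Icc c d) : condExpOn P f A ∈ Icc c d := by
  rw [condExpOn_eq_setAverage]
  exact (convex_Icc c d).set_average_mem isClosed_Icc hA (measure_ne_top P A) hfA hf

lemma condExpOn_eq_add_div_two [IsFiniteMeasure P] {H : Set Ω} (hH : MeasurableSet H)
    (hHA : H ⊆ A) (hPH : P H = P (A \ H)) (hf : IntegrableOn f A P) :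
    condExpOn P f A = (condExpOn P f H + condExpOn P f (A \ H)) / 2 := by
  have hPA : (P A).toReal = 2 * (P H).toReal := by
    rw [← measure_inter_add_sdiff A hH, inter_eq_self_of_subset_right hHA, ← hPH,
      ENNReal.toReal_add (measure_ne_top P H) (measure_ne_top P H)]
    ring
  rw [condExpOn, condExpOn, condExpOn, ← integral_inter_add_sdiff hH hf,
    inter_eq_self_of_subset_right hHA, hPA, ← hPH]
  ring

lemma condExpOn_mem_Icc_of_halves [IsFiniteMeasure P] {H : Set Ω} (hA0 : P A ≠ 0)
    (hH : MeasurableSet H) (hHA : H ⊆ A) (hPH : P H = P (A \ H)) (hf : IntegrableOn f A P)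
    {c d c' d' : ℝ} (hfH : ∀ᵐ ω ∂P.restrict H, f ω ∈ Icc c d)
    (hfAH : ∀ᵐ ω ∂P.restrict (A \ H), f ω ∈ Icc c' d') :
    condExpOn P f A ∈ Icc ((c + c') / 2) ((d + d') / 2) := by
  have hH0 : P H ≠ 0 := fun h0 => hA0 <| by
    rw [← measure_inter_add_sdiff A hH, inter_eq_self_of_subset_right hHA, ← hPH, h0, add_zero]
  have h₁ := condExpOn_mem_Icc hH0 (hf.mono_set hHA) hfH
  have h₂ := condExpOn_mem_Icc (hPH ▸ hH0) (hf.mono_set sdiff_subset) hfAH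
  rw [condExpOn_eq_add_div_two hH hHA hPH hf]
  constructor <;> linarith [h₁.1, h₁.2, h₂.1, h₂.2]

lemma condExpOn_affine [IsFiniteMeasure P] (hA : P A ≠ 0) (hf : IntegrableOn f A P) (a b : ℝ) :
    condExpOn P (fun ω => a * f ω + b) A = a * condExpOn P f A + b := by
  have hA' : (P A).toReal ≠ 0 := ENNReal.toReal_ne_zero.mpr ⟨hA, measure_ne_top P A⟩
  rw [condExpOn, condExpOn,
    integral_add (hf.const_mul a) (integrableOn_const (measure_ne_top P A)),
    integral_const_mul, setIntegral_const, smul_eq_mul, measureReal_def]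
  field_simp

lemma condExpOn_sum {ι : Type*} (s : Finset ι) {X : ι → Ω → ℝ}
    (hX : ∀ i ∈ s, IntegrableOn (X i) A P) :
    condExpOn P (fun ω => ∑ i ∈ s, X i ω) A = ∑ i ∈ s, condExpOn P (X i) A := by
  rw [condExpOn, integral_finsetSum s hX, Finset.sum_div]
  rfl

end CondExpOn

section Tail

variable {Ω : Type*} [MeasurableSpace Ω] {P : Measure Ω} [IsProbabilityMeasure P] {S : Ω → ℝ}
  {α : ℝ}

lemma cdfR_eq_cdf_map (hS : Measurable S) : cdfR P S = cdf (P.map S) := by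
  have := Measure.isProbabilityMeasure_map (μ := P) hS.aemeasurable
  ext x
  rw [cdf_eq_real, measureReal_def, Measure.map_apply hS measurableSet_Iic]
  rfl

lemma measure_tailEvent_ne_zero (hS : Measurable S) (hα : α ∈ Ioo 0 1) :
    P (tailEvent P S α) ≠ 0 := by
  set μ := P.map S
  have := Measure.isProbabilityMeasure_map (μ := P) hS.aemeasurable
  have hVaR : VaR P S α = sInf {x | α ≤ cdf μ x} := by rw [← cdfR_eq_cdf_map hS]; rfl
  set v := VaR P S α
  have hbdd : BddBelow {x | α ≤ cdf μ x} := by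
    obtain ⟨x₀, hx₀⟩ :=
      ((tendsto_cdf_atBot μ).eventually (gt_mem_nhds hα.1)).exists_forall_of_atBot
    exact ⟨x₀, fun x hx => le_of_not_ge fun h => (hx₀ x h).not_ge hx⟩
  have hlt : ∀ x < v, cdf μ x < α := fun x hx =>
    lt_of_not_ge fun h => (hVaR ▸ csInf_le hbdd h).not_gt hx
  have hleft : Function.leftLim (cdf μ) v ≤ α :=
    le_of_tendsto ((cdf μ).mono.tendsto_leftLim v)
      (eventually_nhdsWithin_of_forall fun x hx => (hlt x hx).le)
  have hcompl : P (tailEvent P S α)ᶜ < 1 := calc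
    P (tailEvent P S α)ᶜ = μ (Iio v) := by
      rw [Measure.map_apply hS measurableSet_Iio]; congr 1; ext ω; simp [tailEvent, v]
    _ = ENNReal.ofReal (Function.leftLim (cdf μ) v) := by
      conv_lhs => rw [← measure_cdf μ]
      rw [StieltjesFunction.measure_Iio _ (tendsto_cdf_atBot μ), sub_zero]
    _ < 1 := ENNReal.ofReal_lt_one.mpr (hleft.trans_lt hα.2)
  intro h0
  have h1 := measure_add_measure_compl (μ := P) (s := tailEvent P S α)
    (measurableSet_le measurable_const hS)
  rw [h0, zero_add, measure_univ] at h1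
  exact hcompl.ne h1

lemma TQLM_mem_Icc {U : ℝ → ℝ} (hU : StrictMono U) (hS : Measurable S) (hα : α ∈ Ioo 0 1)
    (hUS : IntegrableOn (fun ω => U (S ω)) (tailEvent P S α) P) {c d : ℝ}
    (hST : ∀ᵐ ω ∂P.restrict (tailEvent P S α), S ω ∈ Icc c d) :
    TQLM P S α U ∈ Icc c d :=
  have h := condExpOn_mem_Icc (measure_tailEvent_ne_zero hS hα) hUS
    (hST.mono fun _ h => ⟨hU.monotone h.1, hU.monotone h.2⟩)
  ginv_mem_Icc hU h.1 h.2

end Tail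

def CapitalAllocationAdditive (α : ℝ) (U : ℝ → ℝ) : Prop :=
  ∀ (Ω : Type) (_ : MeasurableSpace Ω) (P : Measure Ω), IsProbabilityMeasure P →
    ∀ n : ℕ, 2 ≤ n → ∀ X : Fin n → Ω → ℝ,
      (∀ i, Measurable (X i)) → (∀ i, Integrable (X i) P) →
      (∀ i, Integrable (fun ω => U (X i ω)) P) →
      Integrable (fun ω => U (∑ i, X i ω)) P →
      Continuous (cdfR P (fun ω => ∑ i, X i ω)) →
      TQLM P (fun ω => ∑ i, X i ω) α U =
        ∑ i, ginv U (condExpOn P (fun ω => U (X i ω))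
          (tailEvent P (fun ω => ∑ i, X i ω) α))

lemma capitalAllocationAdditive_affine {α a : ℝ} (hα : α ∈ Ioo 0 1) (ha : 0 < a) (b : ℝ) :
    CapitalAllocationAdditive α (fun x => a * x + b) := by
  intro Ω _ P _ n _ X hXm hX _ _ _
  have hT := measure_tailEvent_ne_zero (P := P)
    (Finset.measurable_fun_sum Finset.univ fun i _ => hXm i) hα
  have hXT : ∀ i ∈ Finset.univ, IntegrableOn (X i) (tailEvent P (fun ω => ∑ i, X i ω) α) P :=
    fun i _ => (hX i).integrableOn
  simp only [TQLM, ginv_affine ha, condExpOn_affine hT (integrable_finsetSum _ hXT),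
    condExpOn_affine hT (hXT _ (Finset.mem_univ _)), add_sub_cancel_right,
    mul_div_cancel_left₀ _ ha.ne']
  exact condExpOn_sum Finset.univ hXT

section Uniform

variable {a b : ℝ}

lemma uniform_apply (t : Set ℝ) :
    volume[|Icc a b] t = volume (Icc a b ∩ t) / ENNReal.ofReal (b - a) := by
  rw [cond_apply measurableSet_Icc, Real.volume_Icc, ENNReal.div_eq_inv_mul]

lemma cdfR_uniform (hab : a < b) (x : ℝ) :
    cdfR volume[|Icc a b] id x = max (min b x - a) 0 / (b - a) := by
  have h : Icc a b ∩ {ω | id ω ≤ x} = Icc a (min b x) := by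
    ext ω; simp [and_assoc]
  rw [cdfR, uniform_apply, h, Real.volume_Icc, ENNReal.toReal_div, ENNReal.toReal_ofReal',
    ENNReal.toReal_ofReal (sub_pos.mpr hab).le]

lemma continuous_cdfR_uniform (hab : a < b) : Continuous (cdfR volume[|Icc a b] id) := by
  rw [funext (cdfR_uniform hab)]
  fun_prop

lemma VaR_uniform (hab : a < b) {α : ℝ} (hα : α ∈ Ioc 0 1) :
    VaR volume[|Icc a b] id α = a + α * (b - a) := by
  have hba := sub_pos.mpr hab
  have h : {x | α ≤ cdfR volume[|Icc a b] id x} = Ici (a + α * (b - a)) := by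
    ext x
    rw [mem_ofPred_eq, cdfR_uniform hab, le_div_iff₀ hba, mem_Ici]
    constructor
    · intro h
      by_contra! hx
      refine h.not_gt (max_lt ?_ (by nlinarith [hα.1]))
      linarith [min_le_right b x]
    · intro hx
      refine le_max_of_le_left (le_sub_iff_add_le'.mpr (le_min ?_ hx))
      nlinarith [hα.2]
  exact (congrArg sInf h).trans csInf_Ici

lemma uniform_Icc_eq_Ici_sdiff {z : ℝ} (haz : a ≤ z) (hzb : z ≤ b) :
    volume[|Icc a b] (Icc z ((z + b) / 2)) = volume[|Icc a b] (Ici z \ Icc z ((z + b) / 2)) := by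
  have hI : Icc a b ∩ Icc z ((z + b) / 2) = Icc z ((z + b) / 2) :=
    inter_eq_right.mpr (Icc_subset_Icc haz (by linarith))
  have hJ : Icc a b ∩ (Ici z \ Icc z ((z + b) / 2)) = Ioc ((z + b) / 2) b := by
    ext x
    simp only [mem_inter_iff, mem_Icc, Set.mem_sdiff, mem_Ici, mem_Ioc, not_and, not_le]
    constructor
    · rintro ⟨⟨-, hxb⟩, hzx, hx⟩
      exact ⟨hx hzx, hxb⟩
    · rintro ⟨hx, hxb⟩
      exact ⟨⟨by linarith, hxb⟩, by linarith, fun _ => hx⟩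
  rw [uniform_apply, uniform_apply, hI, hJ, Real.volume_Icc, Real.volume_Ioc]
  congr 2
  ring

end Uniform

namespace CapitalAllocationAdditive

variable {α : ℝ} {U : ℝ → ℝ}

lemma TQLM_eq_add (hadd : CapitalAllocationAdditive α U) (hU : Monotone U) (hUc : Continuous U)
    {Ω : Type} [MeasurableSpace Ω] {P : Measure Ω} [IsProbabilityMeasure P] {S X₀ : Ω → ℝ}
    (hS : Measurable S) (hX₀ : Measurable X₀) (hcdf : Continuous (cdfR P S)) {c d c' d' c'' d'' : ℝ}
    (hSb : ∀ᵐ ω ∂P, S ω ∈ Icc c d) (hX₀b : ∀ᵐ ω ∂P, X₀ ω ∈ Icc c' d')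
    (hX₁b : ∀ᵐ ω ∂P, S ω - X₀ ω ∈ Icc c'' d'') :
    TQLM P S α U = ginv U (condExpOn P (fun ω => U (X₀ ω)) (tailEvent P S α))
      + ginv U (condExpOn P (fun ω => U (S ω - X₀ ω)) (tailEvent P S α)) := by
  have hsum : ∀ ω, ∑ i, ![X₀, fun ω => S ω - X₀ ω] i ω = S ω := fun ω => by simp
  have E := hadd Ω _ P inferInstance 2 le_rfl ![X₀, fun ω => S ω - X₀ ω]
    (Fin.forall_fin_two.mpr ⟨hX₀, hS.sub hX₀⟩)
    (Fin.forall_fin_two.mpr ⟨integrable_comp_of_ae_mem_Icc monotone_id continuous_id hX₀ hX₀b,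
      integrable_comp_of_ae_mem_Icc monotone_id continuous_id (hS.sub hX₀) hX₁b⟩)
    (Fin.forall_fin_two.mpr ⟨integrable_comp_of_ae_mem_Icc hU hUc hX₀ hX₀b,
      integrable_comp_of_ae_mem_Icc hU hUc (hS.sub hX₀) hX₁b⟩)
    (by simpa only [hsum] using integrable_comp_of_ae_mem_Icc hU hUc hS hSb)
    (by simpa only [hsum] using hcdf)
  simp only [hsum, Fin.sum_univ_two] at E
  exact E

lemma quasiMean_mem_Icc (hadd : CapitalAllocationAdditive α U) (hα : α ∈ Ioo 0 1)
    (hU : StrictMono U) (hUc : Continuous U) {Ω : Type} [MeasurableSpace Ω] {P : Measure Ω}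
    [IsProbabilityMeasure P] {S : Ω → ℝ} (hS : Measurable S) (hcdf : Continuous (cdfR P S))
    {H : Set Ω} (hH : MeasurableSet H) (hHT : H ⊆ tailEvent P S α)
    (hPH : P H = P (tailEvent P S α \ H)) {c ε : ℝ}
    (hSb : ∀ᵐ ω ∂P, S ω ∈ Icc c (VaR P S α + ε)) (p q : ℝ) :
    quasiMean U p q ∈ Icc (VaR P S α - quasiMean U (VaR P S α + ε - p) (VaR P S α + ε - q))
      (VaR P S α + ε - quasiMean U (VaR P S α - p) (VaR P S α - q)) := by
  classical
  set z := VaR P S α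
  set T := tailEvent P S α
  have hT : MeasurableSet T := measurableSet_le measurable_const hS
  have hT0 : P T ≠ 0 := measure_tailEvent_ne_zero hS hα
  set X₀ : Ω → ℝ := fun ω => if ω ∈ H then p else q
  have hX₀ : Measurable X₀ := Measurable.ite hH measurable_const measurable_const
  have hX₀b : ∀ᵐ ω ∂P, X₀ ω ∈ Icc (min p q) (max p q) := ae_of_all _ fun ω => by
    by_cases h : ω ∈ H <;> simp [X₀, h]
  have hX₁b : ∀ᵐ ω ∂P, S ω - X₀ ω ∈ Icc (c - max p q) (z + ε - min p q) :=
    (hSb.and hX₀b).mono fun ω h => ⟨by linarith [h.1.1, h.2.2], by linarith [h.1.2, h.2.1]⟩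
  have hX₀H : ∀ᵐ ω ∂P.restrict H, X₀ ω = p := (ae_restrict_mem hH).mono fun _ h => if_pos h
  have hX₀TH : ∀ᵐ ω ∂P.restrict (T \ H), X₀ ω = q :=
    (ae_restrict_mem (hT.diff hH)).mono fun _ h => if_neg h.2
  have hST : ∀ᵐ ω ∂P.restrict T, S ω ∈ Icc z (z + ε) :=
    (ae_restrict_mem hT).and (ae_restrict_of_ae hSb) |>.mono fun _ h => ⟨h.1, h.2.2⟩
  have hUX₁b : ∀ {A : Set Ω} {r : ℝ}, A ⊆ T → (∀ᵐ ω ∂P.restrict A, X₀ ω = r) →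
      ∀ᵐ ω ∂P.restrict A, U (S ω - X₀ ω) ∈ Icc (U (z - r)) (U (z + ε - r)) :=
    fun hAT hr => (hr.and (ae_restrict_of_ae_restrict_of_subset hAT hST)).mono fun _ h => by
      rw [h.1]
      exact ⟨hU.monotone (by linarith [h.2.1]), hU.monotone (by linarith [h.2.2])⟩
  have hc₀ := condExpOn_mem_Icc_of_halves hT0 hH hHT hPH (c := U p) (d := U p) (c' := U q)
    (d' := U q) (integrable_comp_of_ae_mem_Icc hU.monotone hUc hX₀ hX₀b).integrableOn
    (hX₀H.mono fun _ h => by simp [h]) (hX₀TH.mono fun _ h => by simp [h])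
  have hc₁ := condExpOn_mem_Icc_of_halves hT0 hH hHT hPH
    (integrable_comp_of_ae_mem_Icc hU.monotone hUc (hS.sub hX₀) hX₁b).integrableOn
    (hUX₁b hHT hX₀H) (hUX₁b sdiff_subset hX₀TH)
  have hg₁ : ginv U (condExpOn P (fun ω => U (S ω - X₀ ω)) T) ∈ _ :=
    ginv_mem_Icc_quasiMean hU hUc hc₁.1 hc₁.2
  have E : TQLM P S α U = ginv U (condExpOn P (fun ω => U (X₀ ω)) T)
      + ginv U (condExpOn P (fun ω => U (S ω - X₀ ω)) T) :=
    hadd.TQLM_eq_add hU.monotone hUc hS hX₀ hcdf hSb hX₀b hX₁b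
  rw [le_antisymm hc₀.2 hc₀.1] at E
  change TQLM P S α U = quasiMean U p q + _ at E
  have hTQLM := TQLM_mem_Icc hU hS hα
    (integrable_comp_of_ae_mem_Icc hU.monotone hUc hS hSb).integrableOn hST
  constructor <;> linarith [hTQLM.1, hTQLM.2, hg₁.1, hg₁.2]

lemma quasiMean_mem_Icc_of_pos (hadd : CapitalAllocationAdditive α U) (hα : α ∈ Ioo 0 1)
    (hU : StrictMono U) (hUc : Continuous U) (p q z : ℝ) {ε : ℝ} (hε : 0 < ε) :
    quasiMean U p q ∈ Icc (z - quasiMean U (z + ε - p) (z + ε - q))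
      (z + ε - quasiMean U (z - p) (z - q)) := by
  have h1α : 0 < 1 - α := sub_pos.mpr hα.2
  set a := z - α / (1 - α) * ε
  have haz : a ≤ z := by have := div_pos hα.1 h1α; nlinarith
  have hab : a < z + ε := by linarith
  set P := volume[|Icc a (z + ε)]
  have := cond_isProbabilityMeasure_of_finite (μ := volume) (s := Icc a (z + ε))
    (by simp [hab]) (by simp)
  have hVaR : VaR P id α = z := by
    rw [VaR_uniform hab ⟨hα.1, hα.2.le⟩, show a = z - α / (1 - α) * ε from rfl]
    field_simp
    ring
  have hT : tailEvent P id α = Ici z := by rw [tailEvent, hVaR]; rfl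
  have hHT : Icc z ((z + (z + ε)) / 2) ⊆ tailEvent P id α := by
    rw [hT]; exact Icc_subset_Ici_self
  have hPH : P (Icc z ((z + (z + ε)) / 2)) = P (tailEvent P id α \ Icc z ((z + (z + ε)) / 2)) := by
    rw [hT]; exact uniform_Icc_eq_Ici_sdiff haz (by linarith)
  have hSb : ∀ᵐ ω ∂P, id ω ∈ Icc a (VaR P id α + ε) := by
    rw [hVaR]; exact ae_cond_mem measurableSet_Icc
  have h := hadd.quasiMean_mem_Icc hα hU hUc measurable_id (continuous_cdfR_uniform hab)
    measurableSet_Icc hHT hPH hSb p q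
  rwa [hVaR] at h

lemma quasiMean_add_quasiMean_sub (hadd : CapitalAllocationAdditive α U) (hα : α ∈ Ioo 0 1)
    (hU : StrictMono U) (hUc : Continuous U) (p q z : ℝ) :
    quasiMean U p q + quasiMean U (z - p) (z - q) = z := by
  refine le_antisymm (le_of_forall_pos_le_add fun ε hε => ?_)
    (le_of_forall_pos_le_add fun ε hε => ?_)
  · linarith [(hadd.quasiMean_mem_Icc_of_pos hα hU hUc p q z hε).2]
  · have h := (hadd.quasiMean_mem_Icc_of_pos hα hU hUc p q (z - ε) hε).1
    rw [sub_add_cancel] at h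
    linarith

lemma map_midpoint (hadd : CapitalAllocationAdditive α U) (hα : α ∈ Ioo 0 1)
    (hU : StrictMono U) (hUc : Continuous U) (x y : ℝ) :
    U (midpoint ℝ x y) = midpoint ℝ (U x) (U y) := by
  have h := hadd.quasiMean_add_quasiMean_sub hα hU hUc x y (x + y)
  rw [add_sub_cancel_left, add_sub_cancel_right, quasiMean_comm U y x] at h
  have hmid : ∀ s t : ℝ, midpoint ℝ s t = (s + t) / 2 := fun s t => by
    rw [midpoint_eq_smul_add, smul_eq_mul, invOf_eq_inv]; ring
  rw [hmid, hmid, ← apply_quasiMean hU hUc]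
  congr 1
  linarith

end CapitalAllocationAdditive

/-- The capital-allocation additivity
`ρ_U^α(S) = ∑ i, ρ_U^α(X_i | S)`, `S = X_1 + ⋯ + X_n`, holds for every `n ≥ 2`
and every vector of integrable random variables whose sum has a continuous
distribution function (on any probability space, with all conditional
expectations existing) if and only if `U` is linear, `U(x) = a x + b`, `a > 0`. -/
theorem capital_allocation_additive_iff_linear
    (α : ℝ) (hα : α ∈ Set.Ioo (0:ℝ) 1)
    (U : ℝ → ℝ) (hU : StrictMono U) (hUc : Continuous U) :
    (∀ (Ω : Type) (_ : MeasurableSpace Ω) (P : Measure Ω), IsProbabilityMeasure P →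
      ∀ n : ℕ, 2 ≤ n → ∀ X : Fin n → Ω → ℝ,
        (∀ i, Measurable (X i)) → (∀ i, Integrable (X i) P) →
        (∀ i, Integrable (fun ω => U (X i ω)) P) →
        Integrable (fun ω => U (∑ i, X i ω)) P →
        Continuous (cdfR P (fun ω => ∑ i, X i ω)) →
        TQLM P (fun ω => ∑ i, X i ω) α U =
          ∑ i, ginv U (condExpOn P (fun ω => U (X i ω))
            (tailEvent P (fun ω => ∑ i, X i ω) α)))
    ↔ ∃ a b : ℝ, 0 < a ∧ ∀ x : ℝ, U x = a * x + b := by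
  change CapitalAllocationAdditive α U ↔ _
  constructor
  · intro hadd
    exact ⟨U 1 - U 0, U 0, sub_pos.mpr (hU one_pos),
      Continuous.eq_affine_of_map_midpoint hUc (hadd.map_midpoint hα hU hUc)⟩
  · rintro ⟨a, b, ha, hab⟩
    obtain rfl : U = fun x => a * x + b := funext hab
    exact capitalAllocationAdditive_affine hα ha b
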